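/- arXiv:math/0511385 — 6 statements merged into one kernel-verified Lean document; each statement's English description precedes it below -/
import Mathlib

section
/- Let A = [a_ij] be an n×n real symmetric matrix such that: (a) the graph G_A with vertices v_1,...,v_n and an edge between distinct v_i, v_j whenever a_ij ≠ 0 is connected; (b) a_ij ≥ 0 for all i ≠ j; (c) there exist positive reals m_1,...,m_n with ∑_i m_i a_ij ≤ 0 for all j; and (d) the inequality in (c) is strict for some j. Then rank A = n, i.e., A is invertible. -/
/-- Lemma 5.4 (case (d)): a real symmetric matrix with connected graph, nonnegative
off-diagonal entries, and a positive vector `m` with `∑ᵢ mᵢ aᵢⱼ ≤ 0` for all `j`,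
strict for some `j`, has full rank `n`. -/
theorem rank_eq_of_strict {n : ℕ} (A : Matrix (Fin n) (Fin n) ℝ)
    (hsym : A.IsSymm)
    (hconn : (SimpleGraph.fromRel (fun i j => A i j ≠ 0)).Connected)
    (hoff : ∀ i j : Fin n, i ≠ j → 0 ≤ A i j)
    (m : Fin n → ℝ) (hm : ∀ i, 0 < m i)
    (hle : ∀ j, ∑ i, m i * A i j ≤ 0)
    (hstrict : ∃ j, ∑ i, m i * A i j < 0) :
    A.rank = n := by
  have hmne : ∀ i, m i ≠ 0 := fun i => (hm i).ne'
  have hA : ∀ i j, A i j = A j i := fun i j => congrFun (congrFun hsym j) i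
  -- reduce to injectivity of mulVec
  have hker : ∀ x : Fin n → ℝ, A.mulVec x = 0 → x = 0 := by
    intro x hx'
    set y : Fin n → ℝ := fun i => x i / m i with hy
    set b : Fin n → Fin n → ℝ := fun i j => m i * m j * A i j with hb
    have hbsym : ∀ i j, b i j = b j i := fun i j => by
      simp only [hb]; rw [hA i j]; ring
    set c : Fin n → ℝ := fun j => ∑ i, b i j with hc
    have hxy : ∀ i, m i * y i = x i := fun i => by
      simp only [hy]; rw [mul_comm]; exact div_mul_cancel₀ _ (hmne i)
    -- Q = xᵀ A x = 0
    have hQ : ∑ i, ∑ j, b i j * y i * y j = 0 := by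
      have e : ∀ i j, b i j * y i * y j = A i j * x i * x j := fun i j => by
        rw [← hxy i, ← hxy j]; simp only [hb]; ring
      simp_rw [e]
      have e2 : ∀ i : Fin n, ∑ j, A i j * x i * x j = 0 := by
        intro i
        have h0 : A.mulVec x i = 0 := by rw [hx']; rfl
        have e3 : ∑ j, A i j * x i * x j = x i * ∑ j, A i j * x j := by
          rw [Finset.mul_sum]; apply Finset.sum_congr rfl; intros; ring
        rw [e3, show (∑ j, A i j * x j) = A.mulVec x i from rfl, h0, mul_zero]
      simp_rw [e2]
      simp
    -- key identity: T = 2L - 2Q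
    have hswap : ∑ i, ∑ j, b i j * (y j)^2 = ∑ i, ∑ j, b i j * (y i)^2 := by
      rw [Finset.sum_comm]
      apply Finset.sum_congr rfl; intro i _
      apply Finset.sum_congr rfl; intro j _
      rw [hbsym j i]
    have hL : ∑ j, c j * (y j)^2 = ∑ i, ∑ j, b i j * (y j)^2 := by
      rw [Finset.sum_comm]
      apply Finset.sum_congr rfl; intro j _
      simp only [hc, Finset.sum_mul]
    have hT : ∑ i, ∑ j, b i j * (y i - y j)^2 = 2 * ∑ j, c j * (y j)^2 := by
      have expand : ∀ i j : Fin n, b i j * (y i - y j)^2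
          = b i j * (y i)^2 + b i j * (y j)^2 - 2 * (b i j * y i * y j) := by
        intro i j; ring
      simp_rw [expand, Finset.sum_sub_distrib, Finset.sum_add_distrib,
        ← Finset.mul_sum]
      rw [hQ, ← hswap, ← hL]
      ring
    -- signs
    have hbnn : ∀ i j, i ≠ j → 0 ≤ b i j := fun i j hij =>
      mul_nonneg (mul_nonneg (hm i).le (hm j).le) (hoff i j hij)
    have hTterm : ∀ i j, 0 ≤ b i j * (y i - y j)^2 := by
      intro i j
      rcases eq_or_ne i j with rfl | hij
      · simp
      · exact mul_nonneg (hbnn i j hij) (sq_nonneg _)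
    have hcle : ∀ j, c j ≤ 0 := by
      intro j
      have e : c j = m j * ∑ i, m i * A i j := by
        simp only [hc, hb, Finset.mul_sum]
        apply Finset.sum_congr rfl; intros; ring
      rw [e]
      exact mul_nonpos_of_nonneg_of_nonpos (hm j).le (hle j)
    have hLle : ∑ j, c j * (y j)^2 ≤ 0 :=
      Finset.sum_nonpos fun j _ => mul_nonpos_of_nonpos_of_nonneg (hcle j) (sq_nonneg _)
    have hTge : 0 ≤ ∑ i, ∑ j, b i j * (y i - y j)^2 :=
      Finset.sum_nonneg fun i _ => Finset.sum_nonneg fun j _ => hTterm i j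
    have hL0 : ∑ j, c j * (y j)^2 = 0 := le_antisymm hLle (by nlinarith [hT, hTge])
    have hT0 : ∑ i, ∑ j, b i j * (y i - y j)^2 = 0 := by rw [hT, hL0]; ring
    -- each term is zero
    have hceach : ∀ j, c j * (y j)^2 = 0 := by
      intro j
      have h1 := (Finset.sum_eq_zero_iff_of_nonpos
        (fun j _ => mul_nonpos_of_nonpos_of_nonneg (hcle j) (sq_nonneg (y j)))).mp hL0
      exact h1 j (Finset.mem_univ j)
    have hTeach : ∀ i j, b i j * (y i - y j)^2 = 0 := by
      intro i j
      have h1 := (Finset.sum_eq_zero_iff_of_nonneg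
        (fun i _ => Finset.sum_nonneg fun j _ => hTterm i j)).mp hT0 i (Finset.mem_univ i)
      exact (Finset.sum_eq_zero_iff_of_nonneg (fun j _ => hTterm i j)).mp h1
        j (Finset.mem_univ j)
    -- y is constant along edges
    have hedge : ∀ i j, (SimpleGraph.fromRel (fun i j => A i j ≠ 0)).Adj i j →
        y i = y j := by
      intro i j hadj
      rw [SimpleGraph.fromRel_adj] at hadj
      obtain ⟨hij, hne⟩ := hadj
      have hAij : A i j ≠ 0 := by
        rcases hne with h | h
        · exact h
        · rw [hA i j]; exact h
      have hApos : 0 < A i j := lt_of_le_of_ne (hoff i j hij) (Ne.symm hAij)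
      have hbpos : 0 < b i j := mul_pos (mul_pos (hm i) (hm j)) hApos
      have h2 : (y i - y j)^2 = 0 :=
        (mul_eq_zero.mp (hTeach i j)).resolve_left hbpos.ne'
      have h3 : y i - y j = 0 := by
        have := sq_eq_zero_iff.mp h2
        exact this
      linarith [h3]
    -- y is globally constant
    have hconst : ∀ i j : Fin n, y i = y j := by
      intro i j
      obtain ⟨w⟩ := hconn.preconnected i j
      induction w with
      | nil => rfl
      | cons h p ih => exact (hedge _ _ h).trans ih
    -- strict column forces y = 0
    obtain ⟨j₀, hj₀⟩ := hstrict
    have hcneg : c j₀ < 0 := by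
      have e : c j₀ = m j₀ * ∑ i, m i * A i j₀ := by
        simp only [hc, hb, Finset.mul_sum]
        apply Finset.sum_congr rfl; intros; ring
      rw [e]
      exact mul_neg_of_pos_of_neg (hm j₀) hj₀
    have hy0 : y j₀ = 0 := by
      have h2 : (y j₀)^2 = 0 :=
        (mul_eq_zero.mp (hceach j₀)).resolve_left hcneg.ne
      exact sq_eq_zero_iff.mp h2
    funext i
    have h4 : y i = 0 := (hconst i j₀).trans hy0
    have h5 : x i = m i * y i := (hxy i).symm
    simp [h5, h4]
  have hinj : Function.Injective A.mulVec := by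
    have : Function.Injective A.mulVecLin := by
      rw [← LinearMap.ker_eq_bot, LinearMap.ker_eq_bot']
      intro x hx
      exact hker x hx
    exact this
  have hunit : IsUnit A := Matrix.mulVec_injective_iff_isUnit.mp hinj
  rw [Matrix.rank_of_isUnit A hunit]
  simp
end

section
/- Let A = [a_ij] be an n×n real symmetric matrix such that: (a) the graph G_A (vertices v_1,...,v_n, edge between distinct v_i,v_j iff a_ij ≠ 0) is connected; (b) a_ij ≥ 0 for i ≠ j; (c) there exist positive reals m_1,...,m_n with ∑_i m_i a_ij = 0 for all j (so the strictness condition fails). Then rank A = n − 1. -/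
/-!
Write a kernel vector as `x = m * y` and put `B = diag(m) A diag(m)`. Then `B` has zero row and
column sums and `B y = 0`, so expanding the square gives `∑ᵢⱼ Bᵢⱼ (yᵢ - yⱼ)² = 0`. The
off-diagonal entries of `B` are nonnegative, so `yᵢ = yⱼ` along every edge of `G_A`, and `y` is
constant by connectedness. Hence `ker A = span {m}`, and rank–nullity gives `rank A = n - 1`.
-/

open Matrix

theorem SimpleGraph.Connected.apply_eq_of_forall_adj {V α : Type*} {G : SimpleGraph V}
    (hG : G.Connected) {f : V → α} (hf : ∀ u v, G.Adj u v → f u = f v) (u v : V) :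
    f u = f v := by
  obtain ⟨w⟩ := hG.preconnected u v
  induction w with
  | nil => rfl
  | cons hadj _ ih => exact (hf _ _ hadj).trans ih

theorem Matrix.rank_eq_card_sub_one_of_ker_eq_span_singleton {ι K : Type*} [Fintype ι] [Field K]
    {A : Matrix ι ι K} {v : ι → K} (hv : v ≠ 0)
    (hker : LinearMap.ker A.mulVecLin = Submodule.span K {v}) :
    A.rank = Fintype.card ι - 1 := by
  have h := LinearMap.finrank_range_add_finrank_ker A.mulVecLin
  rw [hker, finrank_span_singleton hv, Module.finrank_fintype_fun_eq_card] at h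
  exact Nat.eq_sub_of_add_eq h

section ZeroLineSums

variable {ι R : Type*} [Fintype ι] [CommRing R] {B : Matrix ι ι R}

theorem Matrix.sum_mul_sub_sq_eq_zero (hrow : B *ᵥ 1 = 0) (hcol : 1 ᵥ* B = 0) {y : ι → R}
    (hy : B *ᵥ y = 0) : ∑ i, ∑ j, B i j * (y i - y j) ^ 2 = 0 := by
  have hrow' (i : ι) : ∑ j, B i j = 0 := by simpa [mulVec, dotProduct] using congrFun hrow i
  have hcol' (j : ι) : ∑ i, B i j = 0 := by simpa [vecMul, dotProduct] using congrFun hcol j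
  have hy' (i : ι) : ∑ j, B i j * y j = 0 := by simpa [mulVec, dotProduct] using congrFun hy i
  calc ∑ i, ∑ j, B i j * (y i - y j) ^ 2
      = ∑ i, ∑ j, (y i ^ 2 * B i j + y j ^ 2 * B i j - 2 * (y i * (B i j * y j))) :=
        Finset.sum_congr rfl fun i _ => Finset.sum_congr rfl fun j _ => by ring
    _ = ∑ i, y i ^ 2 * ∑ j, B i j + ∑ j, y j ^ 2 * ∑ i, B i j
          - 2 * ∑ i, y i * ∑ j, B i j * y j := by
        simp only [Finset.sum_add_distrib, Finset.sum_sub_distrib, Finset.mul_sum]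
        rw [Finset.sum_comm (f := fun i j => y j ^ 2 * B i j)]
    _ = 0 := by simp [hrow', hcol', hy']

theorem Matrix.apply_eq_of_mulVec_eq_zero [LinearOrder R] [IsStrictOrderedRing R]
    (hoff : ∀ i j, i ≠ j → 0 ≤ B i j)
    (hrow : B *ᵥ 1 = 0) (hcol : 1 ᵥ* B = 0) {y : ι → R} (hy : B *ᵥ y = 0) {i j : ι}
    (hij : B i j ≠ 0) : y i = y j := by
  have hnonneg (i j : ι) : 0 ≤ B i j * (y i - y j) ^ 2 := by
    rcases eq_or_ne i j with rfl | hne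
    · simp
    · exact mul_nonneg (hoff i j hne) (sq_nonneg _)
  have hterm : B i j * (y i - y j) ^ 2 = 0 := by
    have hsum := sum_mul_sub_sq_eq_zero hrow hcol hy
    rw [Finset.sum_eq_zero_iff_of_nonneg fun i _ => Finset.sum_nonneg fun j _ => hnonneg i j]
      at hsum
    exact (Finset.sum_eq_zero_iff_of_nonneg fun j _ => hnonneg i j).mp
      (hsum i (Finset.mem_univ i)) j (Finset.mem_univ j)
  simpa [hij, sub_eq_zero] using hterm

end ZeroLineSums

theorem Matrix.ker_mulVecLin_eq_span_singleton_of_connected {ι R : Type*} [Fintype ι]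
    [DecidableEq ι] [Field R] [LinearOrder R] [IsStrictOrderedRing R] {A : Matrix ι ι R}
    (hconn : (SimpleGraph.fromRel fun i j => A i j ≠ 0).Connected)
    (hoff : ∀ i j, i ≠ j → 0 ≤ A i j) {m : ι → R} (hm : ∀ i, 0 < m i)
    (hleft : m ᵥ* A = 0) (hright : A *ᵥ m = 0) :
    LinearMap.ker A.mulVecLin = Submodule.span R {m} := by
  refine le_antisymm (fun x hx => ?_) ((Submodule.span_singleton_le_iff_mem _ _).mpr hright)
  set D := diagonal m
  set B := D * A * D
  have hDy : D *ᵥ (x / m) = x := funext fun i => by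
    rw [mulVec_diagonal, Pi.div_apply, mul_div_cancel₀ _ (hm i).ne']
  have hBy : B *ᵥ (x / m) = 0 := by
    rw [LinearMap.mem_ker, mulVecLin_apply] at hx
    rw [← mulVec_mulVec, hDy, ← mulVec_mulVec, hx, mulVec_zero]
  have hD1 : D *ᵥ 1 = m := funext fun i => by rw [mulVec_diagonal, Pi.one_apply, mul_one]
  have h1D : 1 ᵥ* D = m := funext fun i => by rw [vecMul_diagonal, Pi.one_apply, one_mul]
  have hBrow : B *ᵥ 1 = 0 := by rw [← mulVec_mulVec, hD1, ← mulVec_mulVec, hright, mulVec_zero]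
  have hBcol : 1 ᵥ* B = 0 := by rw [← vecMul_vecMul, ← vecMul_vecMul, h1D, hleft, zero_vecMul]
  have hBapply (i j : ι) : B i j = m i * A i j * m j := by simp [B, D]
  have hBoff (i j : ι) (hij : i ≠ j) : 0 ≤ B i j := by
    rw [hBapply]
    exact mul_nonneg (mul_nonneg (hm i).le (hoff i j hij)) (hm j).le
  have hBne {i j : ι} (hij : A i j ≠ 0) : B i j ≠ 0 := by
    rw [hBapply]
    exact mul_ne_zero (mul_ne_zero (hm i).ne' hij) (hm j).ne'
  have hconst : ∀ i j, (x / m) i = (x / m) j := hconn.apply_eq_of_forall_adj fun i j hadj => by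
    rcases (SimpleGraph.fromRel_adj _ i j).mp hadj with ⟨-, hij | hji⟩
    · exact apply_eq_of_mulVec_eq_zero hBoff hBrow hBcol hBy (hBne hij)
    · exact (apply_eq_of_mulVec_eq_zero hBoff hBrow hBcol hBy (hBne hji)).symm
  obtain ⟨i₀⟩ := hconn.nonempty
  refine Submodule.mem_span_singleton.mpr ⟨(x / m) i₀, funext fun i => ?_⟩
  rw [Pi.smul_apply, smul_eq_mul, hconst i₀ i, Pi.div_apply, div_mul_cancel₀ _ (hm i).ne']

/-- Lemma 5.4 (case where (d) fails): a real symmetric matrix with connected graph,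
nonnegative off-diagonal entries, and a positive vector `m` with `∑ᵢ mᵢ aᵢⱼ = 0`
for every `j`, has rank `n - 1`. -/
theorem rank_eq_sub_one {n : ℕ} (A : Matrix (Fin n) (Fin n) ℝ)
    (hsym : A.IsSymm)
    (hconn : (SimpleGraph.fromRel (fun i j => A i j ≠ 0)).Connected)
    (hoff : ∀ i j : Fin n, i ≠ j → 0 ≤ A i j)
    (m : Fin n → ℝ) (hm : ∀ i, 0 < m i)
    (heq : ∀ j, ∑ i, m i * A i j = 0) :
    A.rank = n - 1 := by
  have hleft : m ᵥ* A = 0 := funext heq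
  have hright : A *ᵥ m = 0 := by rw [← hsym, mulVec_transpose, hleft]
  obtain ⟨i₀⟩ := hconn.nonempty
  have hm0 : m ≠ 0 := fun h => (hm i₀).ne' (congrFun h i₀)
  rw [rank_eq_card_sub_one_of_ker_eq_span_singleton hm0
    (ker_mulVecLin_eq_span_singleton_of_connected hconn hoff hm hleft hright), Fintype.card_fin]
end

section
/- Let A = [a_ij] be an n×n real symmetric matrix (n ≥ 2) with a_ij ≥ 0 for i ≠ j and a_nn < 0, and suppose there are positive reals m_1,...,m_n with ∑_{i=1}^n m_i a_ij ≤ 0 for all j. Define B = [b_ij] with b_ij = a_ij − a_in a_nj / a_nn for i,j < n. Then b_ij ≥ a_ij ≥ 0 for all i ≠ j with i,j < n, and ∑_{i=1}^{n−1} m_i b_ij ≤ 0 for all j < n. -/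
/-- The Schur complement `B` of the (negative) last diagonal entry of a real symmetric
matrix with nonnegative off-diagonal entries inherits conditions (b) and (c):
`b_ij ≥ a_ij ≥ 0` off the diagonal, and `∑_{i<n} mᵢ b_ij ≤ 0` for all `j < n`. -/
theorem schur_complement_conditions {n : ℕ} (hn : 1 ≤ n)
    (A : Matrix (Fin (n + 1)) (Fin (n + 1)) ℝ)
    (hsym : A.IsSymm)
    (hoff : ∀ i j : Fin (n + 1), i ≠ j → 0 ≤ A i j)
    (hnn : A (Fin.last n) (Fin.last n) < 0)
    (m : Fin (n + 1) → ℝ) (hm : ∀ i, 0 < m i)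
    (hle : ∀ j, ∑ i, m i * A i j ≤ 0)
    (B : Matrix (Fin n) (Fin n) ℝ)
    (hB : ∀ i j : Fin n, B i j =
      A i.castSucc j.castSucc -
        A i.castSucc (Fin.last n) * A (Fin.last n) j.castSucc /
          A (Fin.last n) (Fin.last n)) :
    (∀ i j : Fin n, i ≠ j →
        A i.castSucc j.castSucc ≤ B i j ∧ 0 ≤ A i.castSucc j.castSucc) ∧
      (∀ j : Fin n, ∑ i : Fin n, m i.castSucc * B i j ≤ 0) := by
  have hL : ∀ j : Fin n, (j.castSucc : Fin (n + 1)) ≠ Fin.last n :=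
    fun j => Fin.ne_of_lt (Fin.castSucc_lt_last j)
  constructor
  · intro i j hij
    have h1 : 0 ≤ A i.castSucc j.castSucc :=
      hoff _ _ (fun h => hij (Fin.castSucc_injective n h))
    refine ⟨?_, h1⟩
    rw [hB]
    have h2 : 0 ≤ A i.castSucc (Fin.last n) := hoff _ _ (hL i)
    have h3 : 0 ≤ A (Fin.last n) j.castSucc := hoff _ _ (Ne.symm (hL j))
    have h4 : A i.castSucc (Fin.last n) * A (Fin.last n) j.castSucc /
        A (Fin.last n) (Fin.last n) ≤ 0 :=
      div_nonpos_of_nonneg_of_nonpos (mul_nonneg h2 h3) hnn.le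
    linarith
  · intro j
    have hT : ∑ i : Fin n, m i.castSucc * A i.castSucc j.castSucc
        + m (Fin.last n) * A (Fin.last n) j.castSucc ≤ 0 := by
      have := hle j.castSucc
      rwa [Fin.sum_univ_castSucc] at this
    have hU : ∑ i : Fin n, m i.castSucc * A i.castSucc (Fin.last n)
        + m (Fin.last n) * A (Fin.last n) (Fin.last n) ≤ 0 := by
      have := hle (Fin.last n)
      rwa [Fin.sum_univ_castSucc] at this
    have h3 : 0 ≤ A (Fin.last n) j.castSucc := hoff _ _ (Ne.symm (hL j))
    set c := A (Fin.last n) j.castSucc / A (Fin.last n) (Fin.last n) with hc_def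
    have hc : c ≤ 0 := div_nonpos_of_nonneg_of_nonpos h3 hnn.le
    have hca : c * A (Fin.last n) (Fin.last n) = A (Fin.last n) j.castSucc :=
      div_mul_cancel₀ _ hnn.ne
    have key : ∑ i : Fin n, m i.castSucc * B i j
        = (∑ i : Fin n, m i.castSucc * A i.castSucc j.castSucc)
          - c * ∑ i : Fin n, m i.castSucc * A i.castSucc (Fin.last n) := by
      rw [Finset.mul_sum, ← Finset.sum_sub_distrib]
      refine Finset.sum_congr rfl fun i _ => ?_
      rw [hB, hc_def]
      ring
    rw [key]
    set T := ∑ i : Fin n, m i.castSucc * A i.castSucc j.castSucc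
    set U := ∑ i : Fin n, m i.castSucc * A i.castSucc (Fin.last n)
    have hmL := (hm (Fin.last n)).le
    have h5 : (-c) * U ≤ (-c) * (-(m (Fin.last n) * A (Fin.last n) (Fin.last n))) :=
      mul_le_mul_of_nonneg_left (by linarith) (by linarith)
    nlinarith [hca, hT]
end

section
/- Let A be an n×n real symmetric matrix whose associated graph G_A is connected, with a_ij ≥ 0 for i ≠ j, and suppose there exist positive reals m_1,...,m_n with ∑_i m_i a_ij ≤ 0 for all j. Then the kernel of A has dimension at most 1, and if the kernel is nonzero it is spanned by the vector (m_1,...,m_n); in particular ∑_i m_i a_ij = 0 for all j in that case. -/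
/-- For a real symmetric matrix with connected graph, nonnegative off-diagonal entries,
and a positive vector `m` with `∑ᵢ mᵢ aᵢⱼ ≤ 0` for all `j`: the kernel of `A` has
dimension at most 1, and any kernel vector is a multiple of `m`; in particular if the
kernel is nonzero then `∑ᵢ mᵢ aᵢⱼ = 0` for all `j`. -/
theorem kernel_spanned_by_m {n : ℕ} (A : Matrix (Fin n) (Fin n) ℝ)
    (hsym : A.IsSymm)
    (hconn : (SimpleGraph.fromRel (fun i j => A i j ≠ 0)).Connected)
    (hoff : ∀ i j : Fin n, i ≠ j → 0 ≤ A i j)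
    (m : Fin n → ℝ) (hm : ∀ i, 0 < m i)
    (hle : ∀ j, ∑ i, m i * A i j ≤ 0) :
    (∀ x : Fin n → ℝ, A.mulVec x = 0 → ∃ c : ℝ, x = c • m) ∧
      ((∃ x : Fin n → ℝ, x ≠ 0 ∧ A.mulVec x = 0) →
        ∀ j, ∑ i, m i * A i j = 0) := by
  have hsym' : ∀ i j, A j i = A i j := fun i j => hsym.apply i j
  have hkey : ∀ x : Fin n → ℝ, A.mulVec x = 0 → ∃ c : ℝ, x = c • m := by
    intro x hx
    set y : Fin n → ℝ := fun i => x i / m i with hy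
    have hxy : ∀ i, x i = y i * m i := by
      intro i
      simp only [hy]
      exact (div_mul_cancel₀ (x i) (hm i).ne').symm
    have hmul : ∀ j, ∑ i, A i j * x i = 0 := by
      intro j
      have h := congrFun hx j
      simp only [Matrix.mulVec, dotProduct, Pi.zero_apply] at h
      calc ∑ i, A i j * x i = ∑ i, A j i * x i := by simp_rw [hsym']
        _ = 0 := h
    have hrow : ∀ i, (∑ j, A i j * m j) ≤ 0 := by
      intro i
      have h : ∑ j, A i j * m j = ∑ j, m j * A j i :=
        Finset.sum_congr rfl fun j _ => by rw [hsym', mul_comm]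
      rw [h]; exact hle i
    have expand : ∀ i j, m i * A i j * m j * (y i - y j)^2
        = (m i * y i ^ 2) * (A i j * m j) + (m i * A i j) * (m j * y j ^ 2)
          - 2 * ((m j * y j) * (A i j * x i)) := by
      intro i j
      rw [hxy i]
      ring
    have h1 : ∑ i, (m i * y i ^ 2) * (∑ j, A i j * m j)
        = ∑ i, ∑ j, (m i * y i ^ 2) * (A i j * m j) := by
      simp_rw [Finset.mul_sum]
    have h2 : ∑ j, (∑ i, m i * A i j) * (m j * y j ^ 2)
        = ∑ i, ∑ j, (m i * A i j) * (m j * y j ^ 2) := by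
      simp_rw [Finset.sum_mul]
      rw [Finset.sum_comm]
    have h3 : ∑ j, (m j * y j) * (∑ i, A i j * x i)
        = ∑ i, ∑ j, (m j * y j) * (A i j * x i) := by
      simp_rw [Finset.mul_sum]
      rw [Finset.sum_comm]
    have hsum : ∑ i, ∑ j, m i * A i j * m j * (y i - y j)^2
        = ∑ i, (m i * y i ^ 2) * (∑ j, A i j * m j)
          + ∑ j, (∑ i, m i * A i j) * (m j * y j ^ 2)
          - 2 * ∑ j, (m j * y j) * (∑ i, A i j * x i) := by
      rw [h1, h2, h3, Finset.mul_sum, ← Finset.sum_add_distrib, ← Finset.sum_sub_distrib]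
      refine Finset.sum_congr rfl fun i _ => ?_
      rw [Finset.mul_sum, ← Finset.sum_add_distrib, ← Finset.sum_sub_distrib]
      exact Finset.sum_congr rfl fun j _ => expand i j
    have hle' : (∑ i, ∑ j, m i * A i j * m j * (y i - y j)^2) ≤ 0 := by
      rw [hsum]
      have t1 : ∑ i, (m i * y i ^ 2) * (∑ j, A i j * m j) ≤ 0 :=
        Finset.sum_nonpos fun i _ =>
          mul_nonpos_of_nonneg_of_nonpos (mul_nonneg (hm i).le (sq_nonneg _)) (hrow i)
      have t2 : ∑ j, (∑ i, m i * A i j) * (m j * y j ^ 2) ≤ 0 :=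
        Finset.sum_nonpos fun j _ =>
          mul_nonpos_of_nonpos_of_nonneg (hle j) (mul_nonneg (hm j).le (sq_nonneg _))
      have t3 : ∑ j, (m j * y j) * (∑ i, A i j * x i) = 0 :=
        Finset.sum_eq_zero fun j _ => by rw [hmul j, mul_zero]
      rw [t3]
      linarith
    have hterm_nonneg : ∀ i j, 0 ≤ m i * A i j * m j * (y i - y j)^2 := by
      intro i j
      rcases eq_or_ne i j with rfl | hij
      · simp
      · have h := hoff i j hij
        have h1 := (hm i).le
        have h2 := (hm j).le
        positivity
    have hnn : 0 ≤ ∑ i, ∑ j, m i * A i j * m j * (y i - y j)^2 :=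
      Finset.sum_nonneg fun i _ => Finset.sum_nonneg fun j _ => hterm_nonneg i j
    have heq : ∑ i, ∑ j, m i * A i j * m j * (y i - y j)^2 = 0 :=
      le_antisymm hle' hnn
    have hall : ∀ i j, m i * A i j * m j * (y i - y j)^2 = 0 := by
      intro i j
      have hrow0 := (Finset.sum_eq_zero_iff_of_nonneg
        (fun i _ => Finset.sum_nonneg fun j _ => hterm_nonneg i j)).mp heq i
        (Finset.mem_univ i)
      exact (Finset.sum_eq_zero_iff_of_nonneg
        (fun j _ => hterm_nonneg i j)).mp hrow0 j (Finset.mem_univ j)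
    have hadj : ∀ i j, A i j ≠ 0 → y i = y j := by
      intro i j hA
      rcases eq_or_ne i j with rfl | hij
      · rfl
      · have hpos : 0 < m i * A i j * m j :=
          mul_pos (mul_pos (hm i) (lt_of_le_of_ne (hoff i j hij) (Ne.symm hA))) (hm j)
        have h := hall i j
        have hsq : (y i - y j)^2 = 0 := by
          by_contra hne
          exact hne (by
            have := mul_eq_zero.mp h
            rcases this with h' | h'
            · exact absurd h' hpos.ne'
            · exact h')
        have := pow_eq_zero_iff (n := 2) (by norm_num) |>.mp hsq
        linarith [sub_eq_zero.mp this]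
    have hwalk : ∀ (i j : Fin n)
        (_ : (SimpleGraph.fromRel fun i j => A i j ≠ 0).Walk i j), y i = y j := by
      intro i j w
      induction w with
      | nil => rfl
      | cons h _ ih =>
        rename_i u v w' _
        have huv : y u = y v := by
          rw [SimpleGraph.fromRel_adj] at h
          obtain ⟨hne, hor⟩ := h
          rcases hor with h' | h'
          · exact hadj _ _ h'
          · exact hadj _ _ (by rw [hsym']; exact h')
        exact huv.trans ih
    obtain ⟨i0⟩ := hconn.nonempty
    refine ⟨y i0, funext fun i => ?_⟩
    have : y i = y i0 := hwalk i i0 (hconn.preconnected i i0).some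
    rw [Pi.smul_apply, smul_eq_mul, hxy i, this, mul_comm]
  refine ⟨hkey, ?_⟩
  rintro ⟨x, hx0, hx⟩ j
  obtain ⟨c, rfl⟩ := hkey x hx
  have hc : c ≠ 0 := by
    rintro rfl
    exact hx0 (zero_smul ℝ m)
  have hm0 : A.mulVec m = 0 := by
    have h : c • A.mulVec m = 0 := by
      rw [← Matrix.mulVec_smul]; exact hx
    rcases smul_eq_zero.mp h with h' | h'
    · exact absurd h' hc
    · exact h'
  have h := congrFun hm0 j
  simp only [Matrix.mulVec, dotProduct, Pi.zero_apply] at h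
  calc ∑ i, m i * A i j = ∑ i, A j i * m i :=
        Finset.sum_congr rfl fun i _ => by rw [hsym', mul_comm]
    _ = 0 := h
end

section
/- Let V be a real vector space of dimension 2n with n ≥ 2 (n ≠ 1). If J and J' are two linear complex structures on V such that every J-complex line (1-dimensional complex subspace, with its complex orientation) is also a J'-complex line with the same orientation, then J = J'. -/
section Aux

variable {V : Type*} [AddCommGroup V] [Module ℝ V]

/-- For a complex structure `J` and `v ≠ 0`, the vectors `v` and `J v` are independent. -/
lemma cs_indep2 {J : V →ₗ[ℝ] V} (hJ : ∀ u : V, J (J u) = -u) {v : V} (hv : v ≠ 0)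
    {s t : ℝ} (h : s • v + t • J v = 0) : s = 0 ∧ t = 0 := by
  have h2 : s • J v - t • v = 0 := by
    have := congrArg J h
    simp only [map_add, map_smul, hJ, map_zero, smul_neg] at this
    linear_combination (norm := module) this
  have key : (s ^ 2 + t ^ 2) • v = 0 := by
    have : (s ^ 2 + t ^ 2) • v = s • (s • v + t • J v) - t • (s • J v - t • v) := by module
    rw [h, h2] at this; simpa using this
  have hst : s ^ 2 + t ^ 2 = 0 := by
    rcases smul_eq_zero.mp key with h | h
    · exact h
    · exact absurd h hv
  constructor <;> nlinarith [sq_nonneg s, sq_nonneg t]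

/-- If `w ∉ span {v, J v}` then `v, J v, w, J w` are linearly independent. -/
lemma cs_indep4 {J : V →ₗ[ℝ] V} (hJ : ∀ u : V, J (J u) = -u) {v w : V} (hv : v ≠ 0)
    (hw : w ∉ Submodule.span ℝ ({v, J v} : Set V))
    {α β γ δ : ℝ} (h : α • v + β • J v + γ • w + δ • J w = 0) :
    α = 0 ∧ β = 0 ∧ γ = 0 ∧ δ = 0 := by
  have h2 : -β • v + α • J v - δ • w + γ • J w = 0 := by
    have := congrArg J h
    simp only [map_add, map_smul, hJ, map_zero, smul_neg] at this
    linear_combination (norm := module) this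
  have key : (γ * α + δ * β) • v + (γ * β - δ * α) • J v + (γ ^ 2 + δ ^ 2) • w = 0 := by
    have : (γ * α + δ * β) • v + (γ * β - δ * α) • J v + (γ ^ 2 + δ ^ 2) • w =
        γ • (α • v + β • J v + γ • w + δ • J w) -
        δ • (-β • v + α • J v - δ • w + γ • J w) := by module
    rw [h, h2] at this; simpa using this
  have hgd : γ ^ 2 + δ ^ 2 = 0 := by
    by_contra hne
    apply hw
    rw [Submodule.mem_span_pair]
    refine ⟨-(γ * α + δ * β) / (γ ^ 2 + δ ^ 2), -(γ * β - δ * α) / (γ ^ 2 + δ ^ 2), ?_⟩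
    have : w = ((γ ^ 2 + δ ^ 2)⁻¹ * -(γ * α + δ * β)) • v +
        ((γ ^ 2 + δ ^ 2)⁻¹ * -(γ * β - δ * α)) • J v := by
      have h3 : (γ ^ 2 + δ ^ 2) • w =
          -(γ * α + δ * β) • v + -(γ * β - δ * α) • J v := by
        linear_combination (norm := module) key
      calc w = (γ ^ 2 + δ ^ 2)⁻¹ • ((γ ^ 2 + δ ^ 2) • w) := by
              rw [smul_smul, inv_mul_cancel₀ hne, one_smul]
        _ = _ := by rw [h3]; module
    rw [this]; ring_nf
  have hγ : γ = 0 := by nlinarith [sq_nonneg γ, sq_nonneg δ]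
  have hδ : δ = 0 := by nlinarith [sq_nonneg γ, sq_nonneg δ]
  subst hγ hδ
  simp only [zero_smul, add_zero] at h
  obtain ⟨hα, hβ⟩ := cs_indep2 hJ hv h
  exact ⟨hα, hβ, rfl, rfl⟩

end Aux

/-- A linear complex structure on `ℝ^{2n}` (`n ≥ 2`) is determined by its oriented
complex lines: if every `J`-complex line is a `J'`-complex line with the same
orientation (i.e. `J' v = a v + b J v` with `b > 0` for every `v ≠ 0`), then `J = J'`. -/
theorem complex_structure_determined_by_lines {V : Type*} [AddCommGroup V] [Module ℝ V]
    [FiniteDimensional ℝ V] {n : ℕ} (hn : 2 ≤ n)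
    (hdim : Module.finrank ℝ V = 2 * n)
    (J J' : V →ₗ[ℝ] V)
    (hJ : J ∘ₗ J = -LinearMap.id) (hJ' : J' ∘ₗ J' = -LinearMap.id)
    (hlines : ∀ v : V, v ≠ 0 → ∃ a b : ℝ, 0 < b ∧ J' v = a • v + b • J v) :
    J = J' := by
  classical
  have hJsq : ∀ u : V, J (J u) = -u := fun u => by
    have := congrFun (congrArg DFunLike.coe hJ) u; simpa using this
  have hJ'sq : ∀ u : V, J' (J' u) = -u := fun u => by
    have := congrFun (congrArg DFunLike.coe hJ') u; simpa using this
  ext v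
  by_cases hv : v = 0
  · simp [hv]
  -- find w outside span {v, J v}
  have hlt : Submodule.span ℝ ({v, J v} : Set V) < ⊤ := by
    apply span_lt_top_of_card_lt_finrank
    have h2 : ({v, J v} : Set V).toFinset.card ≤ 2 := by
      simp only [Set.toFinset_insert, Set.toFinset_singleton]
      exact (Finset.card_insert_le _ _).trans (by simp)
    rw [hdim]; omega
  obtain ⟨w, -, hw⟩ := SetLike.exists_of_lt hlt
  have hw0 : w ≠ 0 := fun h => hw (h ▸ Submodule.zero_mem _)
  have hJv0 : J v ≠ 0 := fun h => by
    apply hv; have := hJsq v; rw [h, map_zero] at this; simpa using this.symm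
  have hvw : v + w ≠ 0 := fun h => by
    apply hw
    have : w = (-1 : ℝ) • v + (0 : ℝ) • J v := by
      have : w = -v := by linear_combination (norm := module) h
      rw [this]; module
    exact Submodule.mem_span_pair.mpr ⟨-1, 0, this.symm⟩
  have hJvw : J v + w ≠ 0 := fun h => by
    apply hw
    have : w = (0 : ℝ) • v + (-1 : ℝ) • J v := by
      have : w = -J v := by linear_combination (norm := module) h
      rw [this]; module
    exact Submodule.mem_span_pair.mpr ⟨0, -1, this.symm⟩
  obtain ⟨a, b, hb, hab⟩ := hlines v hv
  obtain ⟨c, d, hd, hcd⟩ := hlines w hw0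
  obtain ⟨p, q, hq, hpq⟩ := hlines (v + w) hvw
  obtain ⟨e, f, hf, hef⟩ := hlines (J v) hJv0
  obtain ⟨r, s, hs, hrs⟩ := hlines (J v + w) hJvw
  -- from additivity on v + w : a = c, b = d
  have add1 : (p - a) • v + (q - b) • J v + (p - c) • w + (q - d) • J w = 0 := by
    have h0 : J' (v + w) = J' v + J' w := by rw [map_add]
    rw [hpq, hab, hcd, map_add] at h0
    linear_combination (norm := module) h0
  obtain ⟨e1, e2, e3, e4⟩ := cs_indep4 hJsq hv hw add1
  -- from additivity on J v + w : e = c, f = d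
  have add2 : (-(s - f)) • v + (r - e) • J v + (r - c) • w + (s - d) • J w = 0 := by
    have h0 : J' (J v + w) = J' (J v) + J' w := by rw [map_add]
    rw [hrs, hef, hcd, map_add] at h0
    rw [hJsq] at h0
    linear_combination (norm := module) h0
  obtain ⟨f1, f2, f3, f4⟩ := cs_indep4 hJsq hv hw add2
  have hea : e = a := by linarith
  have hfb : f = b := by linarith
  -- apply J' to J' v = a v + b J v
  have sq : (a ^ 2 - b ^ 2 + 1) • v + (2 * a * b) • J v = 0 := by
    have h0 : J' (J' v) = -v := hJ'sq v
    rw [hab, map_add, map_smul, map_smul, hab, hef, hea, hfb, hJsq] at h0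
    linear_combination (norm := module) h0
  obtain ⟨g1, g2⟩ := cs_indep2 hJsq hv sq
  have ha : a = 0 := by
    rcases mul_eq_zero.mp (by linarith : a * b = 0) with h | h
    · exact h
    · exact absurd h (ne_of_gt hb)
  have hb1 : b = 1 := by nlinarith
  rw [hab, ha, hb1]; simp
end

section
/- Let A be an n×n real symmetric matrix with a_ij ≥ 0 for all i ≠ j, connected graph G_A, and positive reals m_1,...,m_n with ∑_i m_i a_ij = 0 for all j. Then for any real numbers s_1,...,s_n with ∑_j m_j s_j = 0, there exist reals r_1,...,r_n such that ∑_i r_i a_ij = s_j for all j. (The image of A equals the orthogonal complement of the vector (m_1,...,m_n).) -/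
/-!
Since `A` is symmetric, its range is the orthogonal complement of its kernel, so it suffices to
show that the kernel is the line `ℝ m`. If `A x = 0`, take an index `i` where `x / m` is maximal:
in `0 = ∑ₖ aᵢₖ mₖ (xₖ / mₖ - xᵢ / mᵢ)` no term is positive, so `xⱼ / mⱼ = xᵢ / mᵢ` whenever
`aᵢⱼ ≠ 0`, and connectivity of `G_A` spreads this over all indices.
-/

open Matrix WithLp

theorem SimpleGraph.Preconnected.of_forall_adj_imp {V : Type*} {G : SimpleGraph V}
    (hG : G.Preconnected) {p : V → Prop} (hp : ∀ u v, G.Adj u v → p u → p v) {u : V}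
    (hu : p u) (v : V) : p v := by
  obtain ⟨w⟩ := hG u v
  induction w with
  | nil => exact hu
  | cons h _ ih => exact ih (hp _ _ h hu)

namespace Matrix

variable {ι : Type*} [Fintype ι] {A : Matrix ι ι ℝ} {m x : ι → ℝ}

theorem div_eq_max_of_mulVec_eq_zero (hoff : ∀ i j, i ≠ j → 0 ≤ A i j)
    (hm : ∀ i, 0 < m i) (hAm : A *ᵥ m = 0) (hAx : A *ᵥ x = 0) {i j : ι}
    (hmax : ∀ k, x k / m k ≤ x i / m i) (hij : A i j ≠ 0) : x j / m j = x i / m i := by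
  set c := x i / m i
  have hsum : ∑ k, A i k * m k * (x k / m k - c) = 0 :=
    calc ∑ k, A i k * m k * (x k / m k - c) = (A *ᵥ x) i - c * (A *ᵥ m) i := by
          simp only [mulVec, dotProduct, Finset.mul_sum, ← Finset.sum_sub_distrib]
          refine Finset.sum_congr rfl fun k _ => ?_
          rw [mul_sub, mul_assoc, mul_div_cancel₀ _ (hm k).ne']
          ring
      _ = 0 := by simp [hAx, hAm]
  have hterm : ∀ k ∈ Finset.univ, A i k * m k * (x k / m k - c) ≤ 0 := by
    intro k _
    rcases eq_or_ne i k with rfl | hik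
    · simp [c]
    · exact mul_nonpos_of_nonneg_of_nonpos (mul_nonneg (hoff i k hik) (hm k).le)
        (sub_nonpos.mpr (hmax k))
  have hj := (Finset.sum_eq_zero_iff_of_nonpos hterm).mp hsum j (Finset.mem_univ j)
  rw [mul_eq_zero, mul_eq_zero, sub_eq_zero] at hj
  exact hj.resolve_left (not_or.mpr ⟨hij, (hm j).ne'⟩)

theorem eq_smul_of_mulVec_eq_zero (G : SimpleGraph ι) (hG : G.Connected)
    (hadj : ∀ i j, G.Adj i j → A i j ≠ 0) (hoff : ∀ i j, i ≠ j → 0 ≤ A i j)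
    (hm : ∀ i, 0 < m i) (hAm : A *ᵥ m = 0) (hAx : A *ᵥ x = 0) :
    ∃ c : ℝ, x = c • m := by
  have := hG.nonempty
  obtain ⟨i, -, hi⟩ :=
    Finset.exists_max_image Finset.univ (fun k => x k / m k) Finset.univ_nonempty
  have hmax : ∀ k, x k / m k ≤ x i / m i := fun k => hi k (Finset.mem_univ k)
  have hconst : ∀ k, x k / m k = x i / m i :=
    hG.preconnected.of_forall_adj_imp (p := fun k => x k / m k = x i / m i)
      (fun u v huv hu => (div_eq_max_of_mulVec_eq_zero hoff hm hAm hAx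
        (hu ▸ hmax) (hadj u v huv)).trans hu) rfl
  refine ⟨x i / m i, funext fun k => ?_⟩
  rw [Pi.smul_apply, smul_eq_mul, ← hconst k, div_mul_cancel₀ _ (hm k).ne']

theorem IsSymm.exists_mulVec_eq_iff [DecidableEq ι] (hA : A.IsSymm) (s : ι → ℝ) :
    (∃ r, A *ᵥ r = s) ↔ ∀ x, A *ᵥ x = 0 → x ⬝ᵥ s = 0 := by
  have hT : (toEuclideanLin A).IsSymmetric :=
    isSymmetric_toEuclideanLin_iff.mpr (isHermitian_iff_isSymm.mpr hA)
  have hrange : LinearMap.range (toEuclideanLin A) = (LinearMap.ker (toEuclideanLin A))ᗮ := by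
    rw [← hT.orthogonal_range, Submodule.orthogonal_orthogonal]
  have h := SetLike.ext_iff.mp hrange (toLp 2 s)
  simp only [LinearMap.mem_range, Submodule.mem_orthogonal', LinearMap.mem_ker] at h
  rw [(toLp_surjective 2).exists, (toLp_surjective 2).forall] at h
  simpa only [toLpLin_toLp, EuclideanSpace.inner_toLp_toLp, star_trivial, toLin'_apply,
    (toLp_injective 2).eq_iff, ofLp_zero] using h

end Matrix

/-- For a real symmetric matrix `A` with connected graph, nonnegative off-diagonal
entries, and a positive vector `m` with `A·m = 0` (i.e. `∑ᵢ mᵢ aᵢⱼ = 0` for all `j`),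
the image of `A` is the orthogonal complement of `m`: every `s` with `∑ⱼ mⱼ sⱼ = 0`
can be written as `sⱼ = ∑ᵢ rᵢ aᵢⱼ`. -/
theorem image_eq_m_perp {n : ℕ} (A : Matrix (Fin n) (Fin n) ℝ)
    (hsym : A.IsSymm)
    (hconn : (SimpleGraph.fromRel (fun i j => A i j ≠ 0)).Connected)
    (hoff : ∀ i j : Fin n, i ≠ j → 0 ≤ A i j)
    (m : Fin n → ℝ) (hm : ∀ i, 0 < m i)
    (heq : ∀ j, ∑ i, m i * A i j = 0) :
    ∀ s : Fin n → ℝ, (∑ j, m j * s j = 0) →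
      ∃ r : Fin n → ℝ, ∀ j, ∑ i, r i * A i j = s j := by
  intro s hs
  have hvecMul : ∀ v, v ᵥ* A = A *ᵥ v := fun v => by rw [← mulVec_transpose, hsym.eq]
  have hAm : A *ᵥ m = 0 := by rw [← hvecMul]; exact funext heq
  have hadj : ∀ i j, (SimpleGraph.fromRel fun i j => A i j ≠ 0).Adj i j → A i j ≠ 0 := by
    rintro i j ⟨-, hij | hji⟩
    exacts [hij, hsym.apply j i ▸ hji]
  obtain ⟨r, hr⟩ := (hsym.exists_mulVec_eq_iff s).mpr fun x hx => by
    obtain ⟨c, rfl⟩ := eq_smul_of_mulVec_eq_zero _ hconn hadj hoff hm hAm hx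
    rw [smul_dotProduct, smul_eq_mul, dotProduct, hs, mul_zero]
  exact ⟨r, fun j => by rw [← hr, ← hvecMul]; rfl⟩
end
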